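/- arXiv:2306.04016 — 2 statements merged into one kernel-verified Lean document; each statement's English description precedes it below -/
import Mathlib

section
/- Let c, d, e be positive integers with e ≤ min{c, d}. Let Π_{c,d,e} be the set of c×d binary (0-1) matrices X satisfying X·1_d ≤ 1_c (entrywise), 1_c^T·X ≤ 1_d^T, and 1_c^T X 1_d = e, and let D_{c,d,e} be the set of c×d real nonnegative matrices satisfying the same three (in)equalities. Then the convex hull of Π_{c,d,e} equals D_{c,d,e}. -/
open Finset

/-- `PiSet c d e`: the set of `c × d` binary matrices with at most one `1` per row,
at most one `1` per column, and exactly `e` ones in total. -/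
def PiSet (c d e : ℕ) : Set (Matrix (Fin c) (Fin d) ℝ) :=
  {X | (∀ i j, X i j = 0 ∨ X i j = 1) ∧ (∀ i, ∑ j, X i j ≤ 1) ∧
    (∀ j, ∑ i, X i j ≤ 1) ∧ ∑ i, ∑ j, X i j = (e : ℝ)}

/-- `DSet c d e`: the fractional relaxation. -/
def DSet (c d e : ℕ) : Set (Matrix (Fin c) (Fin d) ℝ) :=
  {X | (∀ i j, 0 ≤ X i j) ∧ (∀ i, ∑ j, X i j ≤ 1) ∧
    (∀ j, ∑ i, X i j ≤ 1) ∧ ∑ i, ∑ j, X i j = (e : ℝ)}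

/-- The padded matrix: bottom-right block zero, margins filled uniformly. -/
noncomputable def padMat (c d e : ℕ) (X : Matrix (Fin c) (Fin d) ℝ) :
    Matrix (Fin c ⊕ Fin (d - e)) (Fin d ⊕ Fin (c - e)) ℝ
  | Sum.inl i, Sum.inl j => X i j
  | Sum.inl i, Sum.inr _ => (1 - ∑ j, X i j) / ((c : ℝ) - e)
  | Sum.inr _, Sum.inl j => (1 - ∑ i, X i j) / ((d : ℝ) - e)
  | Sum.inr _, Sum.inr _ => 0

@[simp] lemma padMat_ll (c d e : ℕ) (X : Matrix (Fin c) (Fin d) ℝ) (i j) :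
    padMat c d e X (Sum.inl i) (Sum.inl j) = X i j := rfl
@[simp] lemma padMat_lr (c d e : ℕ) (X : Matrix (Fin c) (Fin d) ℝ) (i k) :
    padMat c d e X (Sum.inl i) (Sum.inr k) = (1 - ∑ j, X i j) / ((c : ℝ) - e) := rfl
@[simp] lemma padMat_rl (c d e : ℕ) (X : Matrix (Fin c) (Fin d) ℝ) (k j) :
    padMat c d e X (Sum.inr k) (Sum.inl j) = (1 - ∑ i, X i j) / ((d : ℝ) - e) := rfl
@[simp] lemma padMat_rr (c d e : ℕ) (X : Matrix (Fin c) (Fin d) ℝ) (k k') :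
    padMat c d e X (Sum.inr k) (Sum.inr k') = 0 := rfl

def padEquiv (c d e : ℕ) (h : c + (d - e) = d + (c - e)) :
    (Fin c ⊕ Fin (d - e)) ≃ (Fin d ⊕ Fin (c - e)) :=
  finSumFinEquiv.trans ((finCongr h).trans finSumFinEquiv.symm)

lemma convex_DSet (c d e : ℕ) : Convex ℝ (DSet c d e) := by
  rintro X ⟨h1, h2, h3, h4⟩ Y ⟨g1, g2, g3, g4⟩ a b ha hb hab
  refine ⟨fun i j => ?_, fun i => ?_, fun j => ?_, ?_⟩
  · have := add_nonneg (mul_nonneg ha (h1 i j)) (mul_nonneg hb (g1 i j))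
    simpa [Matrix.add_apply, Matrix.smul_apply, smul_eq_mul] using this
  · simp only [Matrix.add_apply, Matrix.smul_apply, smul_eq_mul, Finset.sum_add_distrib,
      ← Finset.mul_sum]
    nlinarith [h2 i, g2 i]
  · simp only [Matrix.add_apply, Matrix.smul_apply, smul_eq_mul, Finset.sum_add_distrib,
      ← Finset.mul_sum]
    nlinarith [h3 j, g3 j]
  · simp only [Matrix.add_apply, Matrix.smul_apply, smul_eq_mul, Finset.sum_add_distrib,
      ← Finset.mul_sum, h4, g4]
    linear_combination (e : ℝ) * hab

lemma pad_mem_doublyStochastic (c d e : ℕ) (hec : e ≤ c) (hed : e ≤ d)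
    (h : c + (d - e) = d + (c - e)) (X : Matrix (Fin c) (Fin d) ℝ) (hX : X ∈ DSet c d e) :
    (Matrix.of fun p q => padMat c d e X p (padEquiv c d e h q)) ∈
      doublyStochastic ℝ (Fin c ⊕ Fin (d - e)) := by
  obtain ⟨hX0, hXr, hXc, hXs⟩ := hX
  have hcos : ∑ j, ∑ i, X i j = (e : ℝ) := by rw [Finset.sum_comm]; exact hXs
  have hrall : c = e → ∀ i, ∑ j, X i j = 1 := by
    intro hce i
    have h' : ∑ i, ∑ j, X i j = ∑ _i : Fin c, (1 : ℝ) := by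
      rw [hXs]; simp [hce]
    exact (Finset.sum_eq_sum_iff_of_le (fun i _ => hXr i)).1 h' i (mem_univ i)
  have hcall : d = e → ∀ j, ∑ i, X i j = 1 := by
    intro hde j
    have h' : ∑ j, ∑ i, X i j = ∑ _j : Fin d, (1 : ℝ) := by
      rw [hcos]; simp [hde]
    exact (Finset.sum_eq_sum_iff_of_le (fun j _ => hXc j)).1 h' j (mem_univ j)
  have hcnn : (0 : ℝ) ≤ (c : ℝ) - e := by
    have : (e : ℝ) ≤ c := by exact_mod_cast hec
    linarith
  have hdnn : (0 : ℝ) ≤ (d : ℝ) - e := by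
    have : (e : ℝ) ≤ d := by exact_mod_cast hed
    linarith
  have hZnn : ∀ p q, 0 ≤ padMat c d e X p q := by
    rintro (i | k) (j | k')
    · exact hX0 i j
    · exact div_nonneg (by linarith [hXr i]) hcnn
    · exact div_nonneg (by linarith [hXc j]) hdnn
    · simp
  have hZrow : ∀ p, ∑ q : Fin d ⊕ Fin (c - e), padMat c d e X p q = 1 := by
    rintro (i | k)
    · rw [Fintype.sum_sum_type]
      simp only [padMat_ll, padMat_lr, Finset.sum_const, card_univ, Fintype.card_fin,
        nsmul_eq_mul]
      rcases eq_or_lt_of_le hec with hce | hce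
      · rw [hrall hce.symm i]
        simp [← hce]
      · have hcast : ((c - e : ℕ) : ℝ) = (c : ℝ) - e := by
          rw [Nat.cast_sub hec]
        have hne : (c : ℝ) - (e : ℝ) ≠ 0 := by
          have : (e : ℝ) < c := by exact_mod_cast hce
          linarith
        rw [hcast, mul_div_cancel₀ _ hne]
        ring
    · have hde : e < d := by
        have := k.isLt; omega
      rw [Fintype.sum_sum_type]
      simp only [padMat_rl, padMat_rr, Finset.sum_const, ← Finset.sum_div,
        Finset.sum_sub_distrib, hcos, Finset.sum_const, card_univ, Fintype.card_fin,
        nsmul_eq_mul, smul_zero, add_zero, mul_one]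
      have hne : (d : ℝ) - (e : ℝ) ≠ 0 := by
        have : (e : ℝ) < d := by exact_mod_cast hde
        linarith
      rw [div_eq_one_iff_eq hne]
  have hZcol : ∀ q : Fin d ⊕ Fin (c - e), ∑ p : Fin c ⊕ Fin (d - e), padMat c d e X p q = 1 := by
    rintro (j | k')
    · rw [Fintype.sum_sum_type]
      simp only [padMat_ll, padMat_rl, Finset.sum_const, card_univ, Fintype.card_fin,
        nsmul_eq_mul]
      rcases eq_or_lt_of_le hed with hde | hde
      · rw [hcall hde.symm j]
        simp [← hde]
      · have hcast : ((d - e : ℕ) : ℝ) = (d : ℝ) - e := by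
          rw [Nat.cast_sub hed]
        have hne : (d : ℝ) - (e : ℝ) ≠ 0 := by
          have : (e : ℝ) < d := by exact_mod_cast hde
          linarith
        rw [hcast, mul_div_cancel₀ _ hne]
        ring
    · have hce : e < c := by
        have := k'.isLt; omega
      rw [Fintype.sum_sum_type]
      simp only [padMat_lr, padMat_rr, ← Finset.sum_div, Finset.sum_sub_distrib, hXs,
        Finset.sum_const, card_univ, Fintype.card_fin, nsmul_eq_mul, mul_one, add_zero]
      have hne : (c : ℝ) - (e : ℝ) ≠ 0 := by
        have : (e : ℝ) < c := by exact_mod_cast hce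
        linarith
      simp [div_self hne]
  rw [mem_doublyStochastic_iff_sum]
  refine ⟨fun p q => hZnn p _, fun p => ?_, fun q => hZcol _⟩
  · have := Equiv.sum_comp (padEquiv c d e h) (fun q => padMat c d e X p q)
    simpa [this] using hZrow p

theorem convexHull_PiSet_eq_DSet (c d e : ℕ) (hc : 0 < c) (hd : 0 < d) (he : 0 < e)
    (hecd : e ≤ min c d) :
    convexHull ℝ (PiSet c d e) = DSet c d e := by
  have hec : e ≤ c := hecd.trans (min_le_left _ _)
  have hed : e ≤ d := hecd.trans (min_le_right _ _)
  apply Set.Subset.antisymm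
  · refine convexHull_min ?_ (convex_DSet c d e)
    rintro X ⟨h1, h2, h3, h4⟩
    exact ⟨fun i j => by rcases h1 i j with h | h <;> simp [h], h2, h3, h4⟩
  · intro X hX
    have hcard : c + (d - e) = d + (c - e) := by omega
    set E := padEquiv c d e hcard with hE
    set Y : Matrix (Fin c ⊕ Fin (d - e)) (Fin c ⊕ Fin (d - e)) ℝ :=
      Matrix.of fun p q => padMat c d e X p (E q) with hYdef
    have hY : Y ∈ doublyStochastic ℝ (Fin c ⊕ Fin (d - e)) :=
      pad_mem_doublyStochastic c d e hec hed hcard X hX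
    obtain ⟨w, hw0, hw1, hwY⟩ := exists_eq_sum_perm_of_mem_doublyStochastic hY
    have hentry : ∀ p q, (∑ σ : Equiv.Perm (Fin c ⊕ Fin (d - e)),
        w σ * (σ.permMatrix ℝ) p q) = Y p q := by
      intro p q
      rw [← hwY, Matrix.sum_apply]
      simp
    have hP01 : ∀ (σ : Equiv.Perm (Fin c ⊕ Fin (d - e))) p q,
        σ.permMatrix ℝ p q = 0 ∨ σ.permMatrix ℝ p q = 1 := by
      intro σ p q
      simp only [Equiv.Perm.permMatrix, PEquiv.toMatrix_apply, Equiv.toPEquiv_apply]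
      by_cases hq : q ∈ some (σ p) <;> simp only [hq] <;> simp
    have hPnn : ∀ (σ : Equiv.Perm (Fin c ⊕ Fin (d - e))) p q, 0 ≤ σ.permMatrix ℝ p q := by
      intro σ p q; rcases hP01 σ p q with h | h <;> rw [h] <;> norm_num
    have hProw : ∀ (σ : Equiv.Perm (Fin c ⊕ Fin (d - e))) p,
        ∑ q, σ.permMatrix ℝ p q = 1 :=
      fun σ => sum_row_of_mem_doublyStochastic permMatrix_mem_doublyStochastic
    have hPcol : ∀ (σ : Equiv.Perm (Fin c ⊕ Fin (d - e))) q,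
        ∑ p, σ.permMatrix ℝ p q = 1 :=
      fun σ => sum_col_of_mem_doublyStochastic permMatrix_mem_doublyStochastic
    -- permutation matrices in the support vanish on the bottom-right block
    have hBR : ∀ σ, w σ ≠ 0 → ∀ (k : Fin (d - e)) (k' : Fin (c - e)),
        σ.permMatrix ℝ (Sum.inr k) (E.symm (Sum.inr k')) = 0 := by
      intro σ hσ k k'
      have h0 : Y (Sum.inr k) (E.symm (Sum.inr k')) = 0 := by
        simp [hYdef]
      rw [← hentry] at h0
      have h1 := (Finset.sum_eq_zero_iff_of_nonneg
        (fun σ' _ => mul_nonneg (hw0 σ') (hPnn σ' _ _))).1 h0 σ (mem_univ σ)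
      rcases mul_eq_zero.1 h1 with h | h
      · exact absurd h hσ
      · exact h
    set Q : Equiv.Perm (Fin c ⊕ Fin (d - e)) → Matrix (Fin c) (Fin d) ℝ :=
      fun σ => Matrix.of fun i j => σ.permMatrix ℝ (Sum.inl i) (E.symm (Sum.inl j)) with hQdef
    have hQmem : ∀ σ, w σ ≠ 0 → Q σ ∈ PiSet c d e := by
      intro σ hσ
      have hrow : ∀ i : Fin c, ∑ j : Fin d, Q σ i j
          = 1 - ∑ k' : Fin (c - e), σ.permMatrix ℝ (Sum.inl i) (E.symm (Sum.inr k')) := by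
        intro i
        have h1 := Equiv.sum_comp E.symm (fun q => σ.permMatrix ℝ (Sum.inl i) q)
        rw [hProw σ (Sum.inl i)] at h1
        rw [Fintype.sum_sum_type] at h1
        simp only [hQdef, Matrix.of_apply]
        linarith
      refine ⟨fun i j => hP01 σ _ _, fun i => ?_, fun j => ?_, ?_⟩
      · rw [hrow i]
        have : 0 ≤ ∑ k' : Fin (c - e), σ.permMatrix ℝ (Sum.inl i) (E.symm (Sum.inr k')) :=
          Finset.sum_nonneg fun k' _ => hPnn σ _ _
        linarith
      · have h1 := hPcol σ (E.symm (Sum.inl j))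
        rw [Fintype.sum_sum_type] at h1
        have h2 : 0 ≤ ∑ k : Fin (d - e), σ.permMatrix ℝ (Sum.inr k) (E.symm (Sum.inl j)) :=
          Finset.sum_nonneg fun k _ => hPnn σ _ _
        simp only [hQdef, Matrix.of_apply]
        linarith
      · have hcol1 : ∀ k' : Fin (c - e),
            ∑ i : Fin c, σ.permMatrix ℝ (Sum.inl i) (E.symm (Sum.inr k')) = 1 := by
          intro k'
          have h1 := hPcol σ (E.symm (Sum.inr k'))
          rw [Fintype.sum_sum_type] at h1
          have h2 : ∑ k : Fin (d - e), σ.permMatrix ℝ (Sum.inr k) (E.symm (Sum.inr k')) = 0 :=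
            Finset.sum_eq_zero fun k _ => hBR σ hσ k k'
          rw [h2] at h1
          linarith
        have htot : ∑ i : Fin c, ∑ j : Fin d, Q σ i j
            = (c : ℝ) - ∑ k' : Fin (c - e),
                ∑ i : Fin c, σ.permMatrix ℝ (Sum.inl i) (E.symm (Sum.inr k')) := by
          rw [Finset.sum_comm (t := (univ : Finset (Fin c)))]
          simp only [hrow]
          rw [Finset.sum_sub_distrib]
          simp [Finset.sum_comm (s := (univ : Finset (Fin c)))]
        rw [htot]
        simp only [hcol1, Finset.sum_const, card_univ, Fintype.card_fin, nsmul_eq_mul, mul_one]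
        rw [Nat.cast_sub hec]
        ring
    have hXsum : X = ∑ σ ∈ univ.filter (fun σ => w σ ≠ 0), w σ • Q σ := by
      have hfull : X = ∑ σ : Equiv.Perm (Fin c ⊕ Fin (d - e)), w σ • Q σ := by
        ext i j
        rw [Matrix.sum_apply]
        have h1 := hentry (Sum.inl i) (E.symm (Sum.inl j))
        have h2 : Y (Sum.inl i) (E.symm (Sum.inl j)) = X i j := by
          simp [hYdef]
        rw [h2] at h1
        rw [← h1]
        simp [hQdef]
      rw [hfull]
      symm
      apply Finset.sum_subset (Finset.filter_subset _ _)
      intro σ _ hσ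
      simp only [mem_filter, mem_univ, true_and, not_not] at hσ
      simp [hσ]
    rw [hXsum]
    refine (convex_convexHull ℝ (PiSet c d e)).sum_mem (fun σ _ => hw0 σ) ?_ ?_
    · rw [Finset.sum_filter_ne_zero]
      exact hw1
    · intro σ hσ
      simp only [mem_filter, mem_univ, true_and] at hσ
      exact subset_convexHull ℝ _ (hQmem σ hσ)
end

section
/- Let K > 6 be an integer and let t_PQ, t_P, t_Q be nonnegative integers with t_PQ ≤ K−1 and t_PQ + t_P + t_Q ≤ K. Define β := K² − 3K + 2t_PQ − (t_PQ(t_PQ−1) + t_PQ(t_P+t_Q) + t_P t_Q). Then β ≥ (1/2)(K − t_PQ)(K − 6) > 0. -/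
/-!
Writing `s = t_P + t_Q`, AM–GM gives `t_P t_Q ≤ s² / 4`, and the subtracted count
`t_PQ (t_PQ - 1) + t_PQ s + s² / 4` is increasing in `s`, so it is largest at `s = K - t_PQ`.
After this substitution `β - (K - t_PQ)(K - 6) / 2 ≥ (K - t_PQ)(K + t_PQ) / 4 ≥ 0`.
-/

section

variable {R : Type*} [Field R] [LinearOrder R] [IsStrictOrderedRing R]

theorem pair_count_le_of_add_le {K a p q : R} (ha : 0 ≤ a) (hp : 0 ≤ p) (hq : 0 ≤ q)
    (hsum : a + p + q ≤ K) :
    a * (a - 1) + a * (p + q) + p * q ≤ K ^ 2 / 4 + K * a / 2 + a ^ 2 / 4 - a := by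
  have amgm : 4 * p * q ≤ (p + q) ^ 2 := four_mul_le_sq_add p q
  have monotone_in_sum :
      a * (p + q) + (p + q) ^ 2 / 4 ≤ a * (K - a) + (K - a) ^ 2 / 4 := by
    nlinarith
  nlinarith

theorem half_mul_sub_le_of_add_le {K a p q : R} (ha : 0 ≤ a) (hp : 0 ≤ p) (hq : 0 ≤ q)
    (hsum : a + p + q ≤ K) :
    1 / 2 * (K - a) * (K - 6) ≤
      K ^ 2 - 3 * K + 2 * a - (a * (a - 1) + a * (p + q) + p * q) := by
  have hcount := pair_count_le_of_add_le ha hp hq hsum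
  have hgap : 0 ≤ (K - a) * (K + a) := by
    apply mul_nonneg <;> linarith
  nlinarith

end

theorem beta_lower_bound (K tPQ tP tQ : ℕ) (hK : 6 < K) (htPQ : tPQ ≤ K - 1)
    (hsum : tPQ + tP + tQ ≤ K)
    (β : ℝ)
    (hβ : β = (K : ℝ) ^ 2 - 3 * K + 2 * tPQ -
      ((tPQ : ℝ) * (tPQ - 1) + tPQ * (tP + tQ) + tP * tQ)) :
    (1 / 2 : ℝ) * ((K : ℝ) - tPQ) * ((K : ℝ) - 6) ≤ β ∧
      0 < (1 / 2 : ℝ) * ((K : ℝ) - tPQ) * ((K : ℝ) - 6) := by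
  have hsum' : (tPQ : ℝ) + tP + tQ ≤ K := by exact_mod_cast hsum
  have htPQ' : (tPQ : ℝ) < K := by exact_mod_cast (by omega : tPQ < K)
  have hK' : (6 : ℝ) < K := by exact_mod_cast hK
  refine ⟨hβ ▸ half_mul_sub_le_of_add_le (by positivity) (by positivity) (by positivity) hsum', ?_⟩
  exact mul_pos (mul_pos one_half_pos (sub_pos.mpr htPQ')) (sub_pos.mpr hK')
end
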